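/- arXiv:2404.17165 — 3 statements merged into one kernel-verified Lean document; each statement's English description precedes it below -/
import Mathlib

section
/- For all integers n ≥ 2, γ + log(n) + 1/(2(n+1)) < H_n < γ + log(n) + 1/(2(n-1)). -/
/-!
With `y = 1 / (2a + 1)` one has `log (1 + 1/a) = ∑ₖ 2 y^(2k+1) / (2k+1)`. Keeping only the first
term gives the midpoint bound `2 / (2a + 1) ≤ log (a + 1) - log a`; replacing every `1 / (2k+1)`
by `1` leaves a geometric series whose sum is the trapezoid bound `(1/a + 1/(a+1)) / 2`.
These bounds make `Hₙ - log n - 1/(2(n+1))` strictly decreasing and `Hₙ - log n - 1/(2(n-1))`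
strictly increasing for `n ≥ 2`. Both sequences tend to `γ`, which therefore lies strictly
between them.
-/

open Real Filter Topology

section

variable {α : Type*} [Preorder α] [TopologicalSpace α] [OrderClosedTopology α]
  {f : ℕ → α} {a : α} {N n : ℕ}

lemma lt_of_tendsto_of_succ_lt (hf : Tendsto f atTop (𝓝 a))
    (hstep : ∀ m ≥ N, f (m + 1) < f m) (hn : N ≤ n) : a < f n := by
  have hanti : StrictAnti fun k => f (k + N) :=
    strictAnti_nat_of_succ_lt fun k => by simpa [add_right_comm] using hstep (k + N) (by omega)
  obtain ⟨k, rfl⟩ := Nat.exists_eq_add_of_le' hn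
  exact (hanti.antitone.le_of_tendsto (hf.comp (tendsto_add_atTop_nat N)) (k + 1)).trans_lt
    (hanti k.lt_succ_self)

lemma lt_of_tendsto_of_lt_succ (hf : Tendsto f atTop (𝓝 a))
    (hstep : ∀ m ≥ N, f m < f (m + 1)) (hn : N ≤ n) : f n < a :=
  lt_of_tendsto_of_succ_lt (α := αᵒᵈ) hf hstep hn

end

namespace Real

lemma log_one_add_inv_eq {a : ℝ} (ha : 0 < a) : log (1 + a⁻¹) = log (a + 1) - log a := by
  rw [← log_div (by positivity) ha.ne']
  congr 1
  field_simp

lemma two_div_le_log_add_one_sub_log {a : ℝ} (ha : 0 < a) :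
    2 / (2 * a + 1) ≤ log (a + 1) - log a := by
  have h := le_hasSum (hasSum_log_one_add_inv ha) 0 fun k _ => by positivity
  rw [← log_one_add_inv_eq ha]
  simpa [div_eq_mul_inv] using h

lemma log_add_one_sub_log_le {a : ℝ} (ha : 0 < a) :
    log (a + 1) - log a ≤ (1 / a + 1 / (a + 1)) / 2 := by
  set y := 1 / (2 * a + 1) with hy
  have hy0 : 0 ≤ y := by positivity
  have hy_sq : 1 - y ^ 2 = 4 * a * (a + 1) / (2 * a + 1) ^ 2 := by
    rw [hy]
    field_simp
    ring
  have hy1 : y ^ 2 < 1 := by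
    have : 0 < 1 - y ^ 2 := by rw [hy_sq]; positivity
    linarith
  have hlog := hasSum_log_one_add_inv ha
  rw [← hy] at hlog
  calc log (a + 1) - log a = log (1 + a⁻¹) := (log_one_add_inv_eq ha).symm
    _ ≤ 2 * y * (1 - y ^ 2)⁻¹ :=
      hasSum_le (fun k => ?_) hlog ((hasSum_geometric_of_lt_one (sq_nonneg y) hy1).mul_left (2 * y))
    _ = (1 / a + 1 / (a + 1)) / 2 := by
      rw [hy_sq, hy]
      field_simp
      ring
  calc 2 * (1 / (2 * (k : ℝ) + 1)) * y ^ (2 * k + 1) ≤ 2 * 1 * y ^ (2 * k + 1) := by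
        gcongr
        exact div_le_one_of_le₀ (by linarith [k.cast_nonneg (α := ℝ)]) (by positivity)
    _ = 2 * y * (y ^ 2) ^ k := by ring

end Real

lemma tendsto_harmonic_sub_log_sub_one_div (c : ℝ) :
    Tendsto (fun n : ℕ => (harmonic n : ℝ) - log n - 1 / (2 * (n + c))) atTop
      (𝓝 eulerMascheroniConstant) := by
  have h : Tendsto (fun n : ℕ => 1 / (2 * ((n : ℝ) + c))) atTop (𝓝 0) :=
    tendsto_const_nhds.div_atTop <| (tendsto_atTop_add_const_right _ c
      tendsto_natCast_atTop_atTop).const_mul_atTop two_pos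
  simpa using tendsto_harmonic_sub_log.sub h

/-- At `n = 1` the last term is the junk value `1 / 0 = 0`. -/
noncomputable def timsTyrrellSeq (n : ℕ) : ℝ := harmonic n - log n - 1 / (2 * (n - 1))

noncomputable def timsTyrrellSeq' (n : ℕ) : ℝ := harmonic n - log n - 1 / (2 * (n + 1))

lemma tendsto_timsTyrrellSeq : Tendsto timsTyrrellSeq atTop (𝓝 eulerMascheroniConstant) := by
  unfold timsTyrrellSeq
  simpa only [← sub_eq_add_neg] using tendsto_harmonic_sub_log_sub_one_div (-1)

lemma tendsto_timsTyrrellSeq' : Tendsto timsTyrrellSeq' atTop (𝓝 eulerMascheroniConstant) :=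
  tendsto_harmonic_sub_log_sub_one_div 1

lemma timsTyrrellSeq_lt_succ {n : ℕ} (hn : 2 ≤ n) :
    timsTyrrellSeq n < timsTyrrellSeq (n + 1) := by
  have hn1 : (0 : ℝ) < n - 1 := by
    have : (2 : ℝ) ≤ n := by exact_mod_cast hn
    linarith
  have hgap : (1 / (n + 1) + 1 / (2 * (n - 1)) - 1 / (2 * n)) - (1 / n + 1 / (n + 1)) / 2 =
      (1 : ℝ) / (n * (n - 1) * (n + 1)) := by
    field_simp
    ring
  have hstep : log (n + 1) - log n < 1 / (n + 1) + 1 / (2 * (n - 1)) - 1 / (2 * n) :=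
    (log_add_one_sub_log_le (by positivity)).trans_lt (by rw [← sub_pos, hgap]; positivity)
  simp only [timsTyrrellSeq, harmonic_succ]
  push_cast
  rw [add_sub_cancel_right, inv_eq_one_div]
  linarith

lemma timsTyrrellSeq'_succ_lt {n : ℕ} (hn : 1 ≤ n) :
    timsTyrrellSeq' (n + 1) < timsTyrrellSeq' n := by
  have hgap : 2 / (2 * n + 1) - (1 / (n + 1) + 1 / (2 * (n + 1)) - 1 / (2 * (n + 1 + 1))) =
      (3 : ℝ) / (2 * (2 * n + 1) * (n + 1) * (n + 2)) := by
    field_simp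
    ring
  have hstep : 1 / (n + 1) + 1 / (2 * (n + 1)) - 1 / (2 * (n + 1 + 1)) < log (n + 1) - log n :=
    (two_div_le_log_add_one_sub_log (by positivity)).trans_lt' (by rw [← sub_pos, hgap]; positivity)
  simp only [timsTyrrellSeq', harmonic_succ]
  push_cast
  rw [inv_eq_one_div]
  linarith

/-- Tims–Tyrrell (1971): for all integers `n ≥ 2`,
`γ + log n + 1/(2(n+1)) < Hₙ < γ + log n + 1/(2(n-1))`. -/
theorem tims_tyrrell_harmonic_bounds (n : ℕ) (hn : 2 ≤ n) :
    Real.eulerMascheroniConstant + Real.log n + 1 / (2 * ((n : ℝ) + 1)) <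
        (harmonic n : ℝ) ∧
      (harmonic n : ℝ) <
        Real.eulerMascheroniConstant + Real.log n + 1 / (2 * ((n : ℝ) - 1)) := by
  have lower := lt_of_tendsto_of_succ_lt tendsto_timsTyrrellSeq'
    (fun _ => timsTyrrellSeq'_succ_lt) (by omega : 1 ≤ n)
  have upper := lt_of_tendsto_of_lt_succ tendsto_timsTyrrellSeq (fun _ => timsTyrrellSeq_lt_succ) hn
  rw [timsTyrrellSeq'] at lower
  rw [timsTyrrellSeq] at upper
  constructor <;> linarith
end

section
/- For all natural numbers n ≥ 1, γ + log(n + 1/2) + 1/(24(n+1)²) < H_n < γ + log(n + 1/2) + 1/(24n²). -/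
/-!
With `x = 1 / (2n + 2)` one has `(n + 3/2) / (n + 1/2) = (1 + x) / (1 - x)`, so the increments of
`Dₙ = Hₙ - log (n + 1/2)` are `1 / (n + 1) - log ((1 + x) / (1 - x))`. Truncating the series
`log ((1 + x) / (1 - x)) = 2 ∑ x ^ (2k+1) / (2k+1)` after two terms, from below and (with a geometric
tail) from above, shows that `Dₙ - 1 / (24 n²)` increases strictly for `n ≥ 1` and that
`Dₙ - 1 / (24 (n+1)²)` decreases strictly. Both sequences tend to `γ`, which therefore lies strictly
between them.
-/

open Real Filter Topology Finset

theorem StrictMono.lt_of_tendsto {α β : Type*} [TopologicalSpace α] [Preorder α]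
    [OrderClosedTopology α] [PartialOrder β] [IsDirectedOrder β] [NoMaxOrder β] {f : β → α} {a : α}
    (hf : StrictMono f) (ha : Tendsto f atTop (𝓝 a)) (b : β) : f b < a :=
  let ⟨_, hb⟩ := exists_gt b
  (hf hb).trans_le (hf.monotone.ge_of_tendsto ha _)

theorem StrictAnti.lt_of_tendsto {α β : Type*} [TopologicalSpace α] [Preorder α]
    [OrderClosedTopology α] [PartialOrder β] [IsDirectedOrder β] [NoMaxOrder β] {f : β → α} {a : α}
    (hf : StrictAnti f) (ha : Tendsto f atTop (𝓝 a)) (b : β) : a < f b :=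
  let ⟨_, hb⟩ := exists_gt b
  (hf.antitone.le_of_tendsto ha _).trans_lt (hf hb)

lemma tendsto_one_div_mul_sq_atTop {c : ℝ} (hc : 0 < c) :
    Tendsto (fun x : ℝ => 1 / (c * x ^ 2)) atTop (𝓝 0) := by
  refine (tendsto_inv_atTop_zero.comp ((tendsto_pow_atTop two_ne_zero).const_mul_atTop hc)).congr
    fun x => ?_
  simp

lemma two_mul_add_le_log_one_add_div_one_sub {x : ℝ} (h₀ : 0 ≤ x) (h₁ : x < 1) :
    2 * (x + x ^ 3 / 3) ≤ log ((1 + x) / (1 - x)) := by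
  have := sum_range_le_log_div h₀ h₁ 2
  norm_num [sum_range_succ] at this
  linarith

lemma log_one_add_div_one_sub_le {x : ℝ} (h₀ : 0 ≤ x) (h₁ : x < 1) :
    log ((1 + x) / (1 - x)) ≤ 2 * (x + x ^ 3 / 3 + x ^ 5 / (1 - x ^ 2)) := by
  have := log_div_le_sum_range_add h₀ h₁ 2
  norm_num [sum_range_succ] at this
  linarith

lemma log_add_one_sub_log {a : ℝ} (ha : 0 < a) :
    log (a + 1) - log a = log ((1 + 1 / (2 * a + 1)) / (1 - 1 / (2 * a + 1))) := by
  rw [← log_div (by positivity) ha.ne']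
  congr 1
  field_simp
  ring

noncomputable def deTempleSeq (n : ℕ) : ℝ := harmonic n - log (n + 1 / 2)

lemma tendsto_deTempleSeq : Tendsto deTempleSeq atTop (𝓝 eulerMascheroniConstant) := by
  have h := tendsto_harmonic_sub_log.sub
    ((tendsto_log_comp_add_sub_log (1 / 2)).comp tendsto_natCast_atTop_atTop)
  rw [sub_zero] at h
  refine h.congr fun n => ?_
  simp only [Function.comp_apply, deTempleSeq]
  ring

lemma deTempleSeq_succ (n : ℕ) :
    deTempleSeq (n + 1) = deTempleSeq n + 1 / (n + 1) -
      log ((1 + 1 / (2 * (n + 1))) / (1 - 1 / (2 * (n + 1)))) := by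
  have h := log_add_one_sub_log (a := (n : ℝ) + 1 / 2) (by positivity)
  rw [show 2 * ((n : ℝ) + 1 / 2) + 1 = 2 * (n + 1) by ring,
    show (n : ℝ) + 1 / 2 + 1 = n + 1 + 1 / 2 by ring] at h
  simp only [deTempleSeq, harmonic_succ]
  push_cast
  rw [← h]
  ring

lemma one_div_two_mul_add_one_mem_Ico {a : ℝ} (ha : 0 ≤ a) : 1 / (2 * (a + 1)) ∈ Set.Ico 0 1 := by
  constructor
  · positivity
  · rw [div_lt_one (by positivity)]
    linarith

lemma strictMono_deTempleSeq_sub :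
    StrictMono fun n : ℕ => deTempleSeq (n + 1) - 1 / (24 * ((n + 1 : ℕ) : ℝ) ^ 2) := by
  refine strictMono_nat_of_lt_succ fun n => ?_
  set m : ℝ := n + 1
  have hm : 0 < m := by positivity
  have hpoly : 2 * (1 / (2 * (m + 1)) + (1 / (2 * (m + 1))) ^ 3 / 3 +
      (1 / (2 * (m + 1))) ^ 5 / (1 - (1 / (2 * (m + 1))) ^ 2)) <
      1 / (m + 1) + 1 / (24 * m ^ 2) - 1 / (24 * (m + 1) ^ 2) := by
    have h : 1 - (1 / (2 * (m + 1))) ^ 2 = (2 * m + 1) * (2 * m + 3) / (4 * (m + 1) ^ 2) := by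
      field_simp
      ring
    rw [h, ← sub_pos]
    field_simp
    ring_nf
    nlinarith [pow_pos hm 2, pow_pos hm 3]
  obtain ⟨hx₀, hx₁⟩ := one_div_two_mul_add_one_mem_Ico hm.le
  have hlog := log_one_add_div_one_sub_le hx₀ hx₁
  simp only [deTempleSeq_succ (n + 1)]
  push_cast at hlog ⊢
  linarith

lemma strictAnti_deTempleSeq_sub :
    StrictAnti fun n : ℕ => deTempleSeq n - 1 / (24 * ((n : ℝ) + 1) ^ 2) := by
  refine strictAnti_nat_of_succ_lt fun n => ?_
  set m : ℝ := (n : ℝ)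
  have hm : 0 ≤ m := n.cast_nonneg
  have hpoly : 1 / (m + 1) + 1 / (24 * (m + 1) ^ 2) - 1 / (24 * (m + 1 + 1) ^ 2) <
      2 * (1 / (2 * (m + 1)) + (1 / (2 * (m + 1))) ^ 3 / 3) := by
    rw [← sub_pos]
    field_simp
    ring_nf
    nlinarith
  obtain ⟨hx₀, hx₁⟩ := one_div_two_mul_add_one_mem_Ico hm
  have hlog := two_mul_add_le_log_one_add_div_one_sub hx₀ hx₁
  simp only [deTempleSeq_succ n]
  push_cast
  linarith

lemma deTempleSeq_sub_lt_eulerMascheroniConstant {n : ℕ} (hn : n ≠ 0) :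
    deTempleSeq n - 1 / (24 * (n : ℝ) ^ 2) < eulerMascheroniConstant := by
  have hlim : Tendsto (fun n : ℕ => deTempleSeq n - 1 / (24 * (n : ℝ) ^ 2)) atTop
      (𝓝 eulerMascheroniConstant) := by
    simpa using tendsto_deTempleSeq.sub
      ((tendsto_one_div_mul_sq_atTop (by norm_num)).comp tendsto_natCast_atTop_atTop)
  obtain ⟨k, rfl⟩ := Nat.exists_eq_succ_of_ne_zero hn
  exact strictMono_deTempleSeq_sub.lt_of_tendsto (hlim.comp (tendsto_add_atTop_nat 1)) k

lemma eulerMascheroniConstant_lt_deTempleSeq_sub (n : ℕ) :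
    eulerMascheroniConstant < deTempleSeq n - 1 / (24 * ((n : ℝ) + 1) ^ 2) := by
  refine strictAnti_deTempleSeq_sub.lt_of_tendsto ?_ n
  simpa using tendsto_deTempleSeq.sub ((tendsto_one_div_mul_sq_atTop (by norm_num)).comp
    (tendsto_atTop_add_const_right _ 1 tendsto_natCast_atTop_atTop))

/-- DeTemple (1993): for all natural numbers `n ≥ 1`,
`γ + log(n + 1/2) + 1/(24(n+1)²) < Hₙ < γ + log(n + 1/2) + 1/(24n²)`. -/
theorem deTemple_harmonic_bounds (n : ℕ) (hn : 1 ≤ n) :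
    Real.eulerMascheroniConstant + Real.log ((n : ℝ) + 1 / 2) +
        1 / (24 * ((n : ℝ) + 1) ^ 2) < (harmonic n : ℝ) ∧
      (harmonic n : ℝ) <
        Real.eulerMascheroniConstant + Real.log ((n : ℝ) + 1 / 2) +
          1 / (24 * (n : ℝ) ^ 2) := by
  have hlower := eulerMascheroniConstant_lt_deTempleSeq_sub n
  have hupper := deTempleSeq_sub_lt_eulerMascheroniConstant (by omega : n ≠ 0)
  rw [deTempleSeq] at hlower hupper
  constructor <;> linarith
end

section
/- For all natural numbers n ≥ 1, γ + log(n + 1/2) + 1/(24(n+a)²) ≤ H_n < γ + log(n + 1/2) + 1/(24(n+b)²), where a = 1/√(24·(1 − γ − log(3/2))) and b = 1/2. -/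
/-!
With `t = 1/(2x)`, the series `log(1+t) - log(1-t) = 2 ∑ t^(2k+1)/(2k+1)` pins
`log(x + 1/2) - log(x - 1/2)` between `1/x + 1/(12x³)` and `1/x + 1/(12x(x² - 1/4))`.
Hence `Hₙ - log(n + 1/2) - 1/(24(n+c)²)`, which tends to `γ`, increases for `c = 1/2` and
decreases for every `c ≥ 3/2`; the two bounds follow, because `a ≈ 1.55 ≥ 3/2`.
That last estimate needs `γ` to three decimals, which comes from the same two monotone
sequences at small `n`.
-/

open Real Filter Topology Finset

lemma two_mul_add_le_log_sub_log {t : ℝ} (ht0 : 0 ≤ t) (ht1 : t < 1) :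
    2 * t + 2 * t ^ 3 / 3 ≤ log (1 + t) - log (1 - t) := by
  have hs := hasSum_log_sub_log_of_abs_lt_one (abs_lt.mpr ⟨by linarith, ht1⟩)
  have h := sum_le_hasSum (range 2) (fun k _ => by positivity) hs
  norm_num [sum_range_succ] at h
  linarith

lemma log_sub_log_le {t : ℝ} (ht0 : 0 ≤ t) (ht1 : t < 1) :
    log (1 + t) - log (1 - t) ≤ 2 * t + 2 * t ^ 3 / (3 * (1 - t ^ 2)) := by
  have hs := hasSum_log_sub_log_of_abs_lt_one (abs_lt.mpr ⟨by linarith, ht1⟩)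
  have hgeo := (hasSum_geometric_of_lt_one (sq_nonneg t) (by nlinarith)).mul_left (2 * t ^ 3 / 3)
  have h := hasSum_le (fun k => ?_) ((hasSum_nat_add_iff' 1).mpr hs) hgeo
  · rw [sum_range_one, ← div_eq_mul_inv, div_div] at h
    norm_num at h
    linarith
  · calc 2 * (1 / (2 * ((k + 1 : ℕ) : ℝ) + 1)) * t ^ (2 * (k + 1) + 1)
        = 1 / (2 * ((k + 1 : ℕ) : ℝ) + 1) * (2 * t ^ 3 * (t ^ 2) ^ k) := by ring
      _ ≤ 1 / 3 * (2 * t ^ 3 * (t ^ 2) ^ k) := by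
        gcongr
        push_cast
        linarith [k.cast_nonneg (α := ℝ)]
      _ = 2 * t ^ 3 / 3 * (t ^ 2) ^ k := by ring

lemma log_add_half_sub_log_sub_half {x : ℝ} (hx : 1 / 2 < x) :
    log (x + 1 / 2) - log (x - 1 / 2) = log (1 + (2 * x)⁻¹) - log (1 - (2 * x)⁻¹) := by
  have hx0 : x ≠ 0 := by positivity
  rw [show 1 + (2 * x)⁻¹ = (x + 1 / 2) / x by field_simp,
    show 1 - (2 * x)⁻¹ = (x - 1 / 2) / x by field_simp,
    log_div (by linarith) hx0, log_div (by linarith) hx0]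
  ring

lemma inv_add_le_log_add_half_sub_log_sub_half {x : ℝ} (hx : 1 / 2 < x) :
    x⁻¹ + (12 * x ^ 3)⁻¹ ≤ log (x + 1 / 2) - log (x - 1 / 2) := by
  rw [log_add_half_sub_log_sub_half hx]
  convert two_mul_add_le_log_sub_log (t := (2 * x)⁻¹) (by positivity)
    (inv_lt_one_of_one_lt₀ (by linarith)) using 1
  field_simp
  ring

lemma log_add_half_sub_log_sub_half_le {x : ℝ} (hx : 1 / 2 < x) :
    log (x + 1 / 2) - log (x - 1 / 2) ≤ x⁻¹ + (12 * x * (x ^ 2 - 1 / 4))⁻¹ := by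
  rw [log_add_half_sub_log_sub_half hx]
  have hx2 : 4 * x ^ 2 - 1 ≠ 0 := by nlinarith
  convert log_sub_log_le (t := (2 * x)⁻¹) (by positivity)
    (inv_lt_one_of_one_lt₀ (by linarith)) using 1
  field_simp
  ring

noncomputable def chenSeq (c : ℝ) (n : ℕ) : ℝ :=
  harmonic n - log (n + 1 / 2) - 1 / (24 * (n + c) ^ 2)

lemma tendsto_chenSeq (c : ℝ) : Tendsto (chenSeq c) atTop (𝓝 eulerMascheroniConstant) := by
  have hlog : Tendsto (fun n : ℕ => (harmonic n : ℝ) - log (n + 1 / 2)) atTop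
      (𝓝 eulerMascheroniConstant) := by
    refine tendsto_of_tendsto_of_tendsto_of_le_of_le' tendsto_harmonic_sub_log_add_one
      tendsto_harmonic_sub_log ?_ ?_
    all_goals
      filter_upwards [eventually_ge_atTop 1] with n hn
      have hn : (1 : ℝ) ≤ n := by exact_mod_cast hn
      gcongr; linarith
  have hsq : Tendsto (fun n : ℕ => 1 / (24 * ((n : ℝ) + c) ^ 2)) atTop (𝓝 0) := by
    refine tendsto_const_nhds.div_atTop (Tendsto.const_mul_atTop (by norm_num) ?_)
    exact (tendsto_pow_atTop two_ne_zero).comp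
      (tendsto_atTop_add_const_right _ c tendsto_natCast_atTop_atTop)
  exact sub_zero eulerMascheroniConstant ▸ hlog.sub hsq

lemma chenSeq_succ_sub (c : ℝ) (n : ℕ) :
    chenSeq c (n + 1) - chenSeq c n =
      ((n : ℝ) + 1)⁻¹ - (log ((n + 1 : ℝ) + 1 / 2) - log ((n + 1 : ℝ) - 1 / 2)) -
        (1 / (24 * ((n : ℝ) + 1 + c) ^ 2) - 1 / (24 * ((n : ℝ) + c) ^ 2)) := by
  simp only [chenSeq, harmonic_succ]
  push_cast
  ring_nf

lemma strictMono_chenSeq_half : StrictMono (chenSeq (1 / 2)) := by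
  refine strictMono_nat_of_lt_succ fun n => ?_
  rw [← sub_pos, chenSeq_succ_sub]
  set x : ℝ := n + 1
  have hx : 1 / 2 < x := by linarith [n.cast_nonneg (α := ℝ)]
  have hsq : (12 * x * (x ^ 2 - 1 / 4))⁻¹ <
      1 / (24 * (x - 1 / 2) ^ 2) - 1 / (24 * (x + 1 / 2) ^ 2) := by
    have hx2 : 0 < x ^ 2 - 1 / 4 := by nlinarith
    have hxm : 0 < x - 1 / 2 := by linarith
    rw [inv_eq_one_div, div_sub_div _ _ (by positivity) (by positivity),
      div_lt_div_iff₀ (by positivity) (by positivity)]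
    nlinarith [mul_pos hxm hx2]
  rw [show (n : ℝ) + 1 + 1 / 2 = x + 1 / 2 by ring, show (n : ℝ) + 1 / 2 = x - 1 / 2 by ring]
  linarith [log_add_half_sub_log_sub_half_le hx]

lemma antitone_chenSeq {c : ℝ} (hc : 3 / 2 ≤ c) : Antitone (chenSeq c) := by
  refine antitone_nat_of_succ_le fun n => ?_
  rw [← sub_nonpos, chenSeq_succ_sub]
  set x : ℝ := n + 1
  set d : ℝ := n + c
  have hx : 1 / 2 < x := by linarith [n.cast_nonneg (α := ℝ)]
  have hd : x + 1 / 2 ≤ d := by linarith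
  have hsq : 1 / (24 * d ^ 2) - 1 / (24 * (d + 1) ^ 2) ≤ (12 * x ^ 3)⁻¹ := by
    have hd0 : 0 < d := by linarith
    have hx3 : x ^ 3 ≤ (d - 1 / 2) ^ 3 := pow_le_pow_left₀ (by linarith) (by linarith) 3
    rw [inv_eq_one_div, div_sub_div _ _ (by positivity) (by positivity),
      div_le_div_iff₀ (by positivity) (by positivity)]
    nlinarith [pow_pos hd0 3, sq_nonneg (d - 1 / 8)]
  rw [show (n : ℝ) + 1 + c = d + 1 by ring]
  linarith [inv_add_le_log_add_half_sub_log_sub_half hx]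

lemma chenSeq_half_lt_eulerMascheroniConstant (n : ℕ) :
    chenSeq (1 / 2) n < eulerMascheroniConstant :=
  (strictMono_chenSeq_half n.lt_succ_self).trans_le
    (strictMono_chenSeq_half.monotone.ge_of_tendsto (tendsto_chenSeq _) _)

lemma eulerMascheroniConstant_le_chenSeq {c : ℝ} (hc : 3 / 2 ≤ c) (n : ℕ) :
    eulerMascheroniConstant ≤ chenSeq c n :=
  (antitone_chenSeq hc).le_of_tendsto (tendsto_chenSeq c) n

lemma one_sub_eulerMascheroniConstant_sub_log_pos :
    0 < 1 - eulerMascheroniConstant - log (3 / 2) := by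
  have h := eulerMascheroniConstant_le_chenSeq le_rfl 1
  norm_num [chenSeq] at h
  linarith

lemma one_sub_eulerMascheroniConstant_sub_log_le :
    1 - eulerMascheroniConstant - log (3 / 2) ≤ 1 / 54 := by
  have h := chenSeq_half_lt_eulerMascheroniConstant 4
  have hlog : log (9 / 2) = log 3 + log (3 / 2) := by
    rw [← log_mul (by norm_num) (by norm_num)]; norm_num
  norm_num [chenSeq, harmonic_succ, hlog] at h
  linarith [log_three_lt_d9]

lemma three_halves_le_chen_a :
    3 / 2 ≤ 1 / √(24 * (1 - eulerMascheroniConstant - log (3 / 2))) := by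
  have hq := one_sub_eulerMascheroniConstant_sub_log_pos
  rw [le_one_div (by norm_num) (sqrt_pos.2 (by linarith)), sqrt_le_left (by norm_num)]
  linarith [one_sub_eulerMascheroniConstant_sub_log_le]

theorem chen_harmonic_bounds_general (n : ℕ)
    (a b : ℝ)
    (ha : a = 1 / Real.sqrt (24 * (1 - Real.eulerMascheroniConstant -
      Real.log (3 / 2))))
    (hb : b = 1 / 2) :
    Real.eulerMascheroniConstant + Real.log ((n : ℝ) + 1 / 2) +
        1 / (24 * ((n : ℝ) + a) ^ 2) ≤ (harmonic n : ℝ) ∧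
      (harmonic n : ℝ) <
        Real.eulerMascheroniConstant + Real.log ((n : ℝ) + 1 / 2) +
          1 / (24 * ((n : ℝ) + b) ^ 2) := by
  subst ha hb
  have lower := eulerMascheroniConstant_le_chenSeq three_halves_le_chen_a n
  have upper := chenSeq_half_lt_eulerMascheroniConstant n
  unfold chenSeq at lower upper
  constructor <;> linarith

/-- Chen (2010): for all natural numbers `n ≥ 1`,
`γ + log(n + 1/2) + 1/(24(n+a)²) ≤ Hₙ < γ + log(n + 1/2) + 1/(24(n+b)²)`,
where `a = 1/√(24(1 - γ - log(3/2)))` and `b = 1/2`. -/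
theorem chen_harmonic_bounds (n : ℕ) (hn : 1 ≤ n)
    (a b : ℝ)
    (ha : a = 1 / Real.sqrt (24 * (1 - Real.eulerMascheroniConstant -
      Real.log (3 / 2))))
    (hb : b = 1 / 2) :
    Real.eulerMascheroniConstant + Real.log ((n : ℝ) + 1 / 2) +
        1 / (24 * ((n : ℝ) + a) ^ 2) ≤ (harmonic n : ℝ) ∧
      (harmonic n : ℝ) <
        Real.eulerMascheroniConstant + Real.log ((n : ℝ) + 1 / 2) +
          1 / (24 * ((n : ℝ) + b) ^ 2) :=
  chen_harmonic_bounds_general n a b ha hb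
end
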